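/- arXiv:2107.14581 — 5 statements merged into one kernel-verified Lean document; each statement's English description precedes it below -/
import Mathlib

section
/- Let C be a symmetric monoidal category equipped with an insertion structure such that every insertion ε_{A,B} is completely injective, C has basic manipulations, and each ε_{I,A} : (I ⇒ A) ⊗ I ⟶ A is an isomorphism. Then C is a closed symmetric monoidal category: for every morphism f : C ⊗ A ⟶ B there exists a unique morphism f̄ : C ⟶ (A ⇒ B) with (f̄ ⊗ id_A) ≫ ε_{A,B} = f. -/
/-!
The candidate unit `X ⟶ (A ⇒ X ⊗ A)` is assembled from the basic manipulations: `ε_{I,X}⁻¹`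
exhibits `X` as `(I ⇒ X) ⊗ I`, `tens` with the identity process of `A` turns this into a process
`I ⊗ A ⇒ X ⊗ A`, and precomposing with `λ_A⁻¹` through `comp` lands in `A ⇒ X ⊗ A`; its
evaluation is the identity. Postcomposing it with `f̂` curries any `f : X ⊗ A ⟶ B`, and complete
injectivity makes the curry unique.
-/

open CategoryTheory MonoidalCategory

universe v u

/-- An insertion structure on a symmetric monoidal category: to each pair of objects `A, B` it
assigns an object `hom A B` (written `A ⇒ B`), to each morphism `f : A ⟶ B` a state
`static f : I ⟶ (A ⇒ B)` (its static version), and an insertion morphism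
`ε_{A,B} : (A ⇒ B) ⊗ A ⟶ B` satisfying `(f̂ ⊗ 𝟙 A) ≫ ε_{A,B} = λ_A ≫ f`. -/
structure Insertion (C : Type u) [Category.{v} C] [MonoidalCategory C] [SymmetricCategory C] where
  hom : C → C → C
  static : ∀ {A B : C}, (A ⟶ B) → (𝟙_ C ⟶ hom A B)
  ins : ∀ A B : C, hom A B ⊗ A ⟶ B
  static_ins : ∀ {A B : C} (f : A ⟶ B), (static f ⊗ₘ 𝟙 A) ≫ ins A B = (λ_ A).hom ≫ f

namespace Insertion

variable {C : Type u} [Category.{v} C] [MonoidalCategory C] [SymmetricCategory C]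

/-- Every insertion `ε_{A,B}` is completely injective: for every object `X` the map
`h ↦ (h ⊗ 𝟙 A) ≫ ε_{A,B}` on `Hom(X, A ⇒ B)` is injective. -/
def CompletelyInjective (E : Insertion C) : Prop :=
  ∀ (X A B : C), Function.Injective (fun h : X ⟶ E.hom A B => (h ⊗ₘ 𝟙 A) ≫ E.ins A B)

/-- Double evaluation `((A ⇒ B) ⊗ (B ⇒ D)) ⊗ A ⟶ D`: after rearranging by associators and
braidings, evaluate the `(A ⇒ B)`-factor on the `A`-input via `ε_{A,B}`, then evaluate the
`(B ⇒ D)`-factor on the result via `ε_{B,D}`. -/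
def doubleEval (E : Insertion C) (A B D : C) : (E.hom A B ⊗ E.hom B D) ⊗ A ⟶ D :=
  (α_ _ _ _).hom ≫ (𝟙 (E.hom A B) ⊗ₘ (β_ (E.hom B D) A).hom) ≫ (α_ _ _ _).inv ≫
    (E.ins A B ⊗ₘ 𝟙 (E.hom B D)) ≫ (β_ B (E.hom B D)).hom ≫ E.ins B D

/-- Basic manipulations: higher order processes implementing sequential composition
`comp_{A,B,D} : (A ⇒ B) ⊗ (B ⇒ D) ⟶ (A ⇒ D)` and parallel composition
`tens_{A,A',B,B'} : (A ⇒ A') ⊗ (B ⇒ B') ⟶ ((A ⊗ B) ⇒ (A' ⊗ B'))`, characterised by their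
evaluation equations. -/
structure BasicManipulations (E : Insertion C) where
  comp : ∀ A B D : C, E.hom A B ⊗ E.hom B D ⟶ E.hom A D
  tens : ∀ A A' B B' : C, E.hom A A' ⊗ E.hom B B' ⟶ E.hom (A ⊗ B) (A' ⊗ B')
  comp_eval : ∀ A B D : C, (comp A B D ⊗ₘ 𝟙 A) ≫ E.ins A D = E.doubleEval A B D
  tens_eval : ∀ A A' B B' : C,
    (tens A A' B B' ⊗ₘ 𝟙 (A ⊗ B)) ≫ E.ins (A ⊗ B) (A' ⊗ B')
      = tensorμ (E.hom A A') (E.hom B B') A B ≫ (E.ins A A' ⊗ₘ E.ins B B')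

end Insertion

lemma tensorμ_unit_unit {C : Type u} [Category.{v} C] [MonoidalCategory C] [BraidedCategory C]
    (W Z : C) : tensorμ W (𝟙_ C) (𝟙_ C) Z = 𝟙 _ := by
  simp only [tensorμ, braiding_tensorUnit_left]
  monoidal

lemma braiding_whiskerRight_associator_hom {C : Type u} [Category.{v} C] [MonoidalCategory C]
    [SymmetricCategory C] (X Y Z : C) :
    (β_ X Y).hom ▷ Z ≫ (α_ Y X Z).hom =
      (α_ X Y Z).hom ≫ X ◁ (β_ Y Z).hom ≫ (α_ X Z Y).inv ≫ (β_ (X ⊗ Z) Y).hom := by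
  simp [← whiskerLeft_comp_assoc]

namespace Insertion

variable {C : Type u} [Category.{v} C] [MonoidalCategory C] [SymmetricCategory C]
variable (E : Insertion C)

def eval {X A B : C} (g : X ⟶ E.hom A B) : X ⊗ A ⟶ B :=
  (g ⊗ₘ 𝟙 A) ≫ E.ins A B

lemma eval_comp {Y X A B : C} (p : Y ⟶ X) (g : X ⟶ E.hom A B) :
    E.eval (p ≫ g) = p ▷ A ≫ E.eval g := by
  simp [eval]

lemma eval_id (A B : C) : E.eval (𝟙 (E.hom A B)) = E.ins A B := by
  simp [eval]

lemma eval_static {A B : C} (f : A ⟶ B) : E.eval (E.static f) = (λ_ A).hom ≫ f :=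
  E.static_ins f

lemma CompletelyInjective.eval_injective {E : Insertion C} (hinj : E.CompletelyInjective)
    {X A B : C} : Function.Injective (E.eval : (X ⟶ E.hom A B) → (X ⊗ A ⟶ B)) :=
  hinj X A B

lemma doubleEval_eq (A B D : C) :
    E.doubleEval A B D =
      (β_ _ _).hom ▷ A ≫ (α_ _ _ _).hom ≫ E.hom B D ◁ E.ins A B ≫ E.ins B D := by
  rw [doubleEval, tensorHom_id, id_tensorHom, BraidedCategory.braiding_naturality_left_assoc,
    reassoc_of% braiding_whiskerRight_associator_hom]

namespace BasicManipulations

variable {E} (bm : E.BasicManipulations)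

lemma eval_tensorHom_comp {Y Z A B D : C} (g : Y ⟶ E.hom A B) (h : Z ⟶ E.hom B D) :
    E.eval ((g ⊗ₘ h) ≫ bm.comp A B D) =
      (β_ Y Z).hom ▷ A ≫ (α_ Z Y A).hom ≫ Z ◁ E.eval g ≫ E.eval h := by
  rw [eval_comp, eval, bm.comp_eval, doubleEval_eq, ← comp_whiskerRight_assoc,
    BraidedCategory.braiding_naturality, comp_whiskerRight_assoc, cancel_epi,
    tensorHom_def', eval, eval, tensorHom_id, tensorHom_id, whiskerLeft_comp_assoc,
    whisker_exchange_assoc]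
  monoidal

lemma eval_tensorHom_tens {Y Z A A' B B' : C} (g : Y ⟶ E.hom A A') (h : Z ⟶ E.hom B B') :
    E.eval ((g ⊗ₘ h) ≫ bm.tens A A' B B') = tensorμ Y Z A B ≫ (E.eval g ⊗ₘ E.eval h) := by
  rw [eval_comp, eval, eval, eval, bm.tens_eval, tensorμ_natural_left_assoc,
    tensorHom_comp_tensorHom, tensorHom_id, tensorHom_id]

def precomp {Y A B D : C} (p : A ⟶ B) (g : Y ⟶ E.hom B D) : Y ⟶ E.hom A D :=
  (λ_ Y).inv ≫ (E.static p ⊗ₘ g) ≫ bm.comp A B D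

def postcomp {Y A B D : C} (g : Y ⟶ E.hom A B) (f : B ⟶ D) : Y ⟶ E.hom A D :=
  (ρ_ Y).inv ≫ (g ⊗ₘ E.static f) ≫ bm.comp A B D

lemma eval_precomp {Y A B D : C} (p : A ⟶ B) (g : Y ⟶ E.hom B D) :
    E.eval (bm.precomp p g) = Y ◁ p ≫ E.eval g := by
  rw [precomp, eval_comp, eval_tensorHom_comp, eval_static]
  simp

lemma eval_postcomp {Y A B D : C} (g : Y ⟶ E.hom A B) (f : B ⟶ D) :
    E.eval (bm.postcomp g f) = E.eval g ≫ f := by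
  rw [postcomp, eval_comp, eval_tensorHom_comp, eval_static]
  simp

noncomputable def coev (X A : C) [IsIso (E.ins (𝟙_ C) X)] : X ⟶ E.hom A (X ⊗ A) :=
  bm.precomp (λ_ A).inv
    (inv (E.ins (𝟙_ C) X) ≫ (𝟙 _ ⊗ₘ E.static (𝟙 A)) ≫ bm.tens (𝟙_ C) X A A)

lemma eval_coev (X A : C) [IsIso (E.ins (𝟙_ C) X)] : E.eval (bm.coev X A) = 𝟙 (X ⊗ A) := by
  rw [coev, eval_precomp, eval_comp, eval_tensorHom_tens, tensorμ_unit_unit]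
  simp only [Category.id_comp, eval_id, eval_static, Category.comp_id]
  rw [MonoidalCategory.tensorHom_def, ← comp_whiskerRight_assoc, IsIso.inv_hom_id,
    id_whiskerRight, Category.id_comp, ← whiskerLeft_comp, Iso.inv_hom_id, whiskerLeft_id]

end BasicManipulations

end Insertion

/-- An SMC with a completely injective insertion structure, basic manipulations,
and `ε_{I,A}` an isomorphism for every `A`, is closed symmetric monoidal: every
`f : X ⊗ A ⟶ B` has a unique currying `f̄ : X ⟶ (A ⇒ B)` with `(f̄ ⊗ 𝟙 A) ≫ ε_{A,B} = f`. -/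
theorem stmt0 {C : Type u} [Category.{v} C] [MonoidalCategory C] [SymmetricCategory C]
    (E : Insertion C) (hinj : E.CompletelyInjective) (bm : E.BasicManipulations)
    (hiso : ∀ A : C, IsIso (E.ins (𝟙_ C) A)) :
    ∀ {X A B : C} (f : X ⊗ A ⟶ B),
      ∃! fbar : X ⟶ E.hom A B, (fbar ⊗ₘ 𝟙 A) ≫ E.ins A B = f := by
  intro X A B f
  have hcurry : E.eval (bm.postcomp (bm.coev X A) f) = f := by
    rw [bm.eval_postcomp, bm.eval_coev, Category.id_comp]
  exact ⟨_, hcurry, fun g hg => hinj.eval_injective (hg.trans hcurry.symm)⟩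
end

section
/- Let C be a deterministic HOPT with no correlations with single-state objects, let A and A' be causal objects of C, and let X be any object. For every state f : I ⟶ (A ⇒ A') ⊗ X, the morphism m : A ⟶ A' ⊗ X defined as the composite A ≅ I ⊗ A ⟶ ((A ⇒ A') ⊗ X) ⊗ A (via f ⊗ id_A) followed by the rearrangement (via associators and the braiding of X past A) to ((A ⇒ A') ⊗ A) ⊗ X and then by ε_{A,A'} ⊗ id_X, is non-signalling from A to X. -/
/-!
Composing with an effect `π'` on `A'` turns `ε_{A,A'}` into `ε_{A,I}` precomposed with the
currying `g` of `ε_{A,A'} ≫ π'`, so the process becomes the same construction applied to the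
state `f ≫ (g ⊗ 𝟙)` of `(A ⇒ I) ⊗ X`. States of `A ⇒ I` are effects on `A`, so causality of `A`
makes `A ⇒ I` a single-state object; by absence of correlations that state is a product
`π ⊗ σ`, and the process then factors as the effect `π` applied to the input followed by `σ`.
-/

open CategoryTheory MonoidalCategory

universe v u

/-- A higher order process theory (HOPT): a symmetric monoidal category equipped with
internal-hom objects `hom A B` (written `A ⇒ B`), evaluation (insertion) morphisms
`ε_{A,B} : (A ⇒ B) ⊗ A ⟶ B`, and, for every `f : X ⊗ A ⟶ B`, a unique currying
`f̄ : X ⟶ (A ⇒ B)` with `(f̄ ⊗ 𝟙 A) ≫ ε_{A,B} = f`. -/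
structure HOPT (C : Type u) [Category.{v} C] [MonoidalCategory C] [SymmetricCategory C] where
  hom : C → C → C
  ev : ∀ A B : C, hom A B ⊗ A ⟶ B
  curry : ∀ {X A B : C}, (X ⊗ A ⟶ B) → (X ⟶ hom A B)
  curry_ev : ∀ {X A B : C} (f : X ⊗ A ⟶ B), (curry f ⊗ₘ 𝟙 A) ≫ ev A B = f
  curry_unique : ∀ {X A B : C} {f : X ⊗ A ⟶ B} {g : X ⟶ hom A B},
    (g ⊗ₘ 𝟙 A) ≫ ev A B = f → g = curry f

namespace HOPT

variable {C : Type u} [Category.{v} C] [MonoidalCategory C] [SymmetricCategory C] (H : HOPT C)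

/-- The dualising process `d_A : A ⟶ ((A ⇒ I) ⇒ I)`, i.e. the unique morphism with
`(d_A ⊗ 𝟙) ≫ ε_{A⇒I,I} = β_{A,A⇒I} ≫ ε_{A,I}`. -/
def dual (A : C) : A ⟶ H.hom (H.hom A (𝟙_ C)) (𝟙_ C) :=
  H.curry ((β_ A (H.hom A (𝟙_ C))).hom ≫ H.ev A (𝟙_ C))

/-- Double evaluation `((A ⇒ B) ⊗ (B ⇒ D)) ⊗ A ⟶ D`: after rearranging by associators and
braidings, evaluate the `(A ⇒ B)`-factor on the `A`-factor via `ε_{A,B}`, then evaluate the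
`(B ⇒ D)`-factor on the result via `ε_{B,D}`. -/
def doubleEval (A B D : C) : (H.hom A B ⊗ H.hom B D) ⊗ A ⟶ D :=
  (α_ _ _ _).hom ≫ (𝟙 (H.hom A B) ⊗ₘ (β_ (H.hom B D) A).hom) ≫ (α_ _ _ _).inv ≫
    (H.ev A B ⊗ₘ 𝟙 (H.hom B D)) ≫ (β_ B (H.hom B D)).hom ≫ H.ev B D

/-- The lifting process `T_{A,B} : (A ⇒ B) ⟶ ((B ⇒ I) ⇒ (A ⇒ I))`, i.e. the unique morphism
whose double uncurrying is the double evaluation `doubleEval A B I`. -/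
def lift (A B : C) : H.hom A B ⟶ H.hom (H.hom B (𝟙_ C)) (H.hom A (𝟙_ C)) :=
  H.curry (H.curry (H.doubleEval A B (𝟙_ C)))

/-- The static currying `φ : (X ⇒ (A ⇒ B)) ⟶ ((X ⊗ A) ⇒ B)`, i.e. the unique morphism whose
uncurrying reassociates, evaluates the `(X ⇒ (A ⇒ B))`-factor on the `X`-factor via
`ε_{X,A⇒B}`, and then evaluates the result on the `A`-factor via `ε_{A,B}`. -/
def staticCurry (X A B : C) : H.hom X (H.hom A B) ⟶ H.hom (X ⊗ A) B :=
  H.curry ((α_ (H.hom X (H.hom A B)) X A).inv ≫ (H.ev X (H.hom A B) ⊗ₘ 𝟙 A) ≫ H.ev A B)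

end HOPT

/-- A process theory is deterministic if it has exactly one scalar. -/
def Deterministic (C : Type u) [Category.{v} C] [MonoidalCategory C] : Prop :=
  ∀ s t : 𝟙_ C ⟶ 𝟙_ C, s = t

/-- An object is causal if it has exactly one effect. -/
def Causal {C : Type u} [Category.{v} C] [MonoidalCategory C] (A : C) : Prop :=
  ∃! _e : A ⟶ 𝟙_ C, True

/-- A theory has no correlations with single-state objects if every joint state with a
single-state object is a product state. -/
def NoCorrelations (C : Type u) [Category.{v} C] [MonoidalCategory C] : Prop :=
  ∀ Y : C, (∃! _π : 𝟙_ C ⟶ Y, True) →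
    ∀ (X : C) (ρ : 𝟙_ C ⟶ X ⊗ Y), ∃ (ρ' : 𝟙_ C ⟶ X) (π : 𝟙_ C ⟶ Y),
      ρ = (λ_ (𝟙_ C)).inv ≫ (ρ' ⊗ₘ π)

/-- In a deterministic theory, `m : A ⟶ A' ⊗ X` is non-signalling from `A` to `X` if for every
effect `π' : A' ⟶ I` there are an effect `π : A ⟶ I` and a state `σ : I ⟶ X` with
`m ≫ (π' ⊗ 𝟙 X) ≫ λ_X = π ≫ σ`. -/
def NonSignalling {C : Type u} [Category.{v} C] [MonoidalCategory C] [SymmetricCategory C]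
    {A A' X : C} (m : A ⟶ A' ⊗ X) : Prop :=
  ∀ π' : A' ⟶ 𝟙_ C, ∃ (π : A ⟶ 𝟙_ C) (σ : 𝟙_ C ⟶ X),
    m ≫ (π' ⊗ₘ 𝟙 X) ≫ (λ_ X).hom = π ≫ σ

namespace HOPT

variable {C : Type u} [Category.{v} C] [MonoidalCategory C] [SymmetricCategory C] (H : HOPT C)

theorem ext_of_ev {X A B : C} {g g' : X ⟶ H.hom A B}
    (h : (g ⊗ₘ 𝟙 A) ≫ H.ev A B = (g' ⊗ₘ 𝟙 A) ≫ H.ev A B) : g = g' :=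
  (H.curry_unique h).trans (H.curry_unique rfl).symm

theorem existsUnique_state_hom_unit {A : C} (hA : Causal A) :
    ∃! _π : 𝟙_ C ⟶ H.hom A (𝟙_ C), True := by
  obtain ⟨e, -, he⟩ := hA
  refine ⟨H.curry ((λ_ A).hom ≫ e), trivial, fun π _ => H.ext_of_ev ?_⟩
  rw [H.curry_ev, ← cancel_epi (λ_ A).inv, Iso.inv_hom_id_assoc]
  exact he _ trivial

end HOPT

theorem NoCorrelations.exists_eq_tensor_left {C : Type u} [Category.{v} C] [MonoidalCategory C]
    [SymmetricCategory C] (hnc : NoCorrelations C) {Y : C} (hY : ∃! _π : 𝟙_ C ⟶ Y, True)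
    {X : C} (ρ : 𝟙_ C ⟶ Y ⊗ X) :
    ∃ (π : 𝟙_ C ⟶ Y) (ρ' : 𝟙_ C ⟶ X), ρ = (λ_ (𝟙_ C)).inv ≫ (π ⊗ₘ ρ') := by
  obtain ⟨ρ', π, h⟩ := hnc Y hY X (ρ ≫ (β_ Y X).hom)
  refine ⟨π, ρ', ?_⟩
  rw [← Iso.eq_comp_inv] at h
  rw [h, ← SymmetricCategory.braiding_swap_eq_inv_braiding, Category.assoc,
    BraidedCategory.braiding_naturality, braiding_tensorUnit_left, Category.assoc,
    Iso.inv_hom_id_assoc, unitors_inv_equal]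

section plugState

variable {C : Type u} [Category.{v} C] [MonoidalCategory C] [SymmetricCategory C]

/-- The process `A ⟶ B ⊗ X` that feeds the `P`-part of the state `f` into `e` alongside the
input, passing the `X`-part through. -/
def plugState {P A B X : C} (e : P ⊗ A ⟶ B) (f : 𝟙_ C ⟶ P ⊗ X) : A ⟶ B ⊗ X :=
  (λ_ A).inv ≫ (f ⊗ₘ 𝟙 A) ≫ (α_ P X A).hom ≫ (𝟙 P ⊗ₘ (β_ X A).hom) ≫ (α_ P A X).inv ≫
    (e ⊗ₘ 𝟙 X)

variable {P Q A B B' X X' : C}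

theorem plugState_comp (e : P ⊗ A ⟶ B) (h : B ⟶ B') (f : 𝟙_ C ⟶ P ⊗ X) :
    plugState e f ≫ (h ⊗ₘ 𝟙 X) = plugState (e ≫ h) f := by
  simp [plugState]

theorem plugState_precomp (g : P ⟶ Q) (e : Q ⊗ A ⟶ B) (f : 𝟙_ C ⟶ P ⊗ X) :
    plugState ((g ⊗ₘ 𝟙 A) ≫ e) f = plugState e (f ≫ (g ⊗ₘ 𝟙 X)) := by
  simp only [plugState, MonoidalCategory.tensorHom_def, whiskerLeft_id, Category.comp_id,
    whiskerRight_tensor, id_whiskerRight, Category.id_comp, Iso.inv_hom_id, comp_whiskerRight,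
    Category.assoc, Iso.cancel_iso_inv_left]
  rw [associator_naturality_left_assoc, ← whisker_exchange_assoc,
    associator_inv_naturality_left_assoc]

theorem plugState_whiskerLeft (e : P ⊗ A ⟶ B) (f : 𝟙_ C ⟶ P ⊗ X) (h : X ⟶ X') :
    plugState e (f ≫ (P ◁ h)) = plugState e f ≫ (B ◁ h) := by
  simp only [plugState, MonoidalCategory.tensorHom_def, comp_whiskerRight, whisker_assoc,
    whiskerLeft_id, Category.comp_id, whiskerRight_tensor, id_whiskerRight, Category.id_comp,
    Iso.inv_hom_id, Category.assoc, Iso.inv_hom_id_assoc, Iso.cancel_iso_inv_left]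
  rw [← whiskerLeft_comp_assoc, BraidedCategory.braiding_naturality_left, whiskerLeft_comp_assoc,
    associator_inv_naturality_right_assoc, whisker_exchange]

theorem plugState_rightUnitor_inv (e : P ⊗ A ⟶ B) (π : 𝟙_ C ⟶ P) :
    plugState e (π ≫ (ρ_ P).inv) = (λ_ A).inv ≫ (π ▷ A) ≫ e ≫ (ρ_ B).inv := by
  simp [plugState, MonoidalCategory.tensorHom_def]

theorem plugState_tensor_comp_leftUnitor (e : P ⊗ A ⟶ 𝟙_ C) (π : 𝟙_ C ⟶ P)
    (σ : 𝟙_ C ⟶ X) :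
    plugState e ((λ_ (𝟙_ C)).inv ≫ (π ⊗ₘ σ)) ≫ (λ_ X).hom =
      ((λ_ A).inv ≫ (π ⊗ₘ 𝟙 A) ≫ e) ≫ σ := by
  have hprod : (λ_ (𝟙_ C)).inv ≫ (π ⊗ₘ σ) = (π ≫ (ρ_ P).inv) ≫ (P ◁ σ) := by
    rw [MonoidalCategory.tensorHom_def, unitors_inv_equal, ← rightUnitor_inv_naturality_assoc,
      Category.assoc]
  rw [hprod, plugState_whiskerLeft, plugState_rightUnitor_inv]
  simp [unitors_equal]

end plugState

theorem stmt5_general {C : Type u} [Category.{v} C] [MonoidalCategory C] [SymmetricCategory C]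
    (H : HOPT C) (hnc : NoCorrelations C)
    (A A' : C) (hA : Causal A) (X : C)
    (f : 𝟙_ C ⟶ H.hom A A' ⊗ X) :
    NonSignalling
      ((λ_ A).inv ≫ (f ⊗ₘ 𝟙 A) ≫ (α_ (H.hom A A') X A).hom ≫
        (𝟙 (H.hom A A') ⊗ₘ (β_ X A).hom) ≫ (α_ (H.hom A A') A X).inv ≫
        (H.ev A A' ⊗ₘ 𝟙 X)) := by
  intro π'
  obtain ⟨π, σ, hfg⟩ := hnc.exists_eq_tensor_left (H.existsUnique_state_hom_unit hA)
    (f ≫ (H.curry (H.ev A A' ≫ π') ⊗ₘ 𝟙 X))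
  refine ⟨(λ_ A).inv ≫ (π ⊗ₘ 𝟙 A) ≫ H.ev A (𝟙_ C), σ, ?_⟩
  change plugState (H.ev A A') f ≫ _ = _
  rw [← Category.assoc (plugState _ f), plugState_comp, ← H.curry_ev (H.ev A A' ≫ π'),
    plugState_precomp, hfg, plugState_tensor_comp_leftUnitor]

/-- in a deterministic HOPT with no correlations with single-state objects, for
causal `A, A'` and any `X`, every state `f : I ⟶ (A ⇒ A') ⊗ X` induces a process
`m : A ⟶ A' ⊗ X` which is non-signalling from `A` to `X`. -/
theorem stmt5 {C : Type u} [Category.{v} C] [MonoidalCategory C] [SymmetricCategory C]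
    (H : HOPT C) (hdet : Deterministic C) (hnc : NoCorrelations C)
    (A A' : C) (hA : Causal A) (hA' : Causal A') (X : C)
    (f : 𝟙_ C ⟶ H.hom A A' ⊗ X) :
    NonSignalling
      ((λ_ A).inv ≫ (f ⊗ₘ 𝟙 A) ≫ (α_ (H.hom A A') X A).hom ≫
        (𝟙 (H.hom A A') ⊗ₘ (β_ X A).hom) ≫ (α_ (H.hom A A') A X).inv ≫
        (H.ev A A' ⊗ₘ 𝟙 X)) :=
  stmt5_general H hnc A A' hA X f
end

section
/- Let C be a HOPT. The following are equivalent: (1) for all objects A, B of C the lifting process T_{A,B} : (A ⇒ B) ⟶ ((B ⇒ I) ⇒ (A ⇒ I)) is an isomorphism; (2) for every object B of C the lifting process T_{I,B} is an isomorphism; (3) for every object B of C the dualising process d_B : B ⟶ ((B ⇒ I) ⇒ I) is an isomorphism. -/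
open CategoryTheory MonoidalCategory

universe v u

/-! Both `d_B` and `T_{A,B}` are tested by the Yoneda lemma. After uncurrying, postcomposition
with `d_B` on `Z ⟶ B` becomes the pairing `g ↦ (g ⊗ 𝟙) ≫ β ≫ ε_{B,I}` into
`Z ⊗ (B ⇒ I) ⟶ I`, and postcomposition with `T_{A,B}` on `Z ⟶ (A ⇒ B)` becomes, after
uncurrying twice and reshuffling the tensor factors, the same pairing at `Z ⊗ A`. So `T_{A,B}`
is invertible iff the pairing for `B` is bijective at every object of the form `Z ⊗ A`, and
`d_B` iff it is bijective at every object; the case `A = I` recovers all objects since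
`Z ≅ Z ⊗ I`. -/

namespace HOPT

variable {C : Type u} [Category.{v} C] [MonoidalCategory C] [SymmetricCategory C] (H : HOPT C)

def uncurry {X A B : C} (g : X ⟶ H.hom A B) : X ⊗ A ⟶ B := g ▷ A ≫ H.ev A B

@[simp]
lemma uncurry_curry {X A B : C} (f : X ⊗ A ⟶ B) : H.uncurry (H.curry f) = f := by
  rw [uncurry, ← tensorHom_id]
  exact H.curry_ev f

@[simp]
lemma curry_uncurry {X A B : C} (g : X ⟶ H.hom A B) : H.curry (H.uncurry g) = g :=
  (H.curry_unique (by rw [tensorHom_id]; rfl)).symm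

def uncurryEquiv (X A B : C) : (X ⟶ H.hom A B) ≃ (X ⊗ A ⟶ B) where
  toFun := H.uncurry
  invFun := H.curry
  left_inv := H.curry_uncurry
  right_inv := H.uncurry_curry

lemma uncurry_comp {X Y A B : C} (h : X ⟶ Y) (g : Y ⟶ H.hom A B) :
    H.uncurry (h ≫ g) = h ▷ A ≫ H.uncurry g := by
  simp only [uncurry, comp_whiskerRight, Category.assoc]

def pairing (B : C) {Z : C} (g : Z ⟶ B) : Z ⊗ H.hom B (𝟙_ C) ⟶ 𝟙_ C :=
  g ▷ _ ≫ (β_ B (H.hom B (𝟙_ C))).hom ≫ H.ev B (𝟙_ C)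

lemma pairing_comp (B : C) {Z Z' : C} (h : Z ⟶ Z') (g : Z' ⟶ B) :
    H.pairing B (h ≫ g) = h ▷ _ ≫ H.pairing B g := by
  simp only [pairing, comp_whiskerRight, Category.assoc]

lemma pairing_bijective_iff_of_iso (B : C) {Z Z' : C} (e : Z ≅ Z') :
    Function.Bijective (H.pairing B (Z := Z)) ↔ Function.Bijective (H.pairing B (Z := Z')) := by
  have : H.pairing B (Z := Z) =
      (whiskerRightIso e _).homFromEquiv.symm ∘ H.pairing B ∘ e.homFromEquiv := by
    funext g
    simp [pairing_comp]
  rw [this, Function.Bijective.of_comp_iff' (Equiv.bijective _),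
    Function.Bijective.of_comp_iff _ (Equiv.bijective _)]

lemma uncurry_comp_dual (B : C) {Z : C} (g : Z ⟶ B) :
    H.uncurry (g ≫ H.dual B) = H.pairing B g := by
  rw [uncurry_comp, dual, uncurry_curry, pairing]

def swapRight (Z W A : C) : (Z ⊗ W) ⊗ A ≅ (Z ⊗ A) ⊗ W :=
  α_ Z W A ≪≫ whiskerLeftIso Z (β_ W A) ≪≫ (α_ Z A W).symm

lemma uncurry_uncurry_comp_lift (A B : C) {Z : C} (g : Z ⟶ H.hom A B) :
    H.uncurry (H.uncurry (g ≫ H.lift A B)) =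
      (swapRight Z (H.hom B (𝟙_ C)) A).hom ≫ H.pairing B (H.uncurry g) := by
  rw [uncurry_comp, uncurry_comp, lift, uncurry_curry, uncurry_curry]
  simp only [doubleEval, pairing, swapRight, uncurry, Iso.trans_hom, Iso.symm_hom,
    whiskerLeftIso_hom, Category.assoc, tensorHom_id, id_tensorHom]
  rw [associator_naturality_left_assoc, ← whisker_exchange_assoc,
    associator_inv_naturality_left_assoc, ← comp_whiskerRight_assoc]

lemma isIso_dual_iff (B : C) :
    IsIso (H.dual B) ↔ ∀ Z : C, Function.Bijective (H.pairing B (Z := Z)) := by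
  rw [isIso_iff_yoneda_map_bijective]
  refine forall_congr' fun Z => ?_
  have : H.pairing B (Z := Z) = H.uncurryEquiv _ _ _ ∘ (· ≫ H.dual B) :=
    funext fun g => (H.uncurry_comp_dual B g).symm
  rw [this, Function.Bijective.of_comp_iff' (Equiv.bijective _)]

lemma isIso_lift_iff (A B : C) :
    IsIso (H.lift A B) ↔ ∀ Z : C, Function.Bijective (H.pairing B (Z := Z ⊗ A)) := by
  rw [isIso_iff_yoneda_map_bijective]
  refine forall_congr' fun Z => ?_
  have : H.uncurryEquiv _ A _ ∘ H.uncurryEquiv Z _ _ ∘ (· ≫ H.lift A B) =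
      (swapRight Z _ A).homFromEquiv.symm ∘ H.pairing B ∘ H.uncurryEquiv Z A B :=
    funext fun g => H.uncurry_uncurry_comp_lift A B g
  calc Function.Bijective (· ≫ H.lift A B)
      ↔ Function.Bijective (H.uncurryEquiv _ A _ ∘ H.uncurryEquiv Z _ _ ∘ (· ≫ H.lift A B)) := by
        rw [Function.Bijective.of_comp_iff' (Equiv.bijective _),
          Function.Bijective.of_comp_iff' (Equiv.bijective _)]
    _ ↔ Function.Bijective (H.pairing B) := by
        rw [this, Function.Bijective.of_comp_iff' (Equiv.bijective _),
          Function.Bijective.of_comp_iff _ (Equiv.bijective _)]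

end HOPT

/-- in a HOPT the following are equivalent: (1) every lifting process `T_{A,B}`
is an isomorphism; (2) every `T_{I,B}` is an isomorphism; (3) every dualising process `d_B`
is an isomorphism. -/
theorem stmt8 {C : Type u} [Category.{v} C] [MonoidalCategory C] [SymmetricCategory C]
    (H : HOPT C) :
    List.TFAE [∀ A B : C, IsIso (H.lift A B),
               ∀ B : C, IsIso (H.lift (𝟙_ C) B),
               ∀ B : C, IsIso (H.dual B)] := by
  tfae_have 1 → 2 := fun h B => h _ B
  tfae_have 2 → 3 := fun h B => (H.isIso_dual_iff B).2 fun Z =>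
    (H.pairing_bijective_iff_of_iso B (ρ_ Z)).1 ((H.isIso_lift_iff _ B).1 (h B) Z)
  tfae_have 3 → 1 := fun h A B => (H.isIso_lift_iff A B).2 fun Z =>
    (H.isIso_dual_iff B).1 (h B) (Z ⊗ A)
  tfae_finish
end

section
/- Let C be a deterministic HOPT with no correlations with single-state objects such that the tensor product preserves equivalence of double duals, and let A and A' be causal objects such that d_A and d_{A'} are isomorphisms. Then the object A ⇒ A' has no-signalling states. -/
open CategoryTheory MonoidalCategory

universe v u

/-- An object `Y` of a deterministic theory has no-signalling states if for every `X` and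
every state `m : I ⟶ Y ⊗ X` there is a state `m' : I ⟶ X` with
`m ≫ (Π ⊗ 𝟙 X) ≫ λ_X = m'` for every effect `Π : Y ⟶ I`. -/
def HasNoSignallingStates {C : Type u} [Category.{v} C] [MonoidalCategory C]
    [SymmetricCategory C] (Y : C) : Prop :=
  ∀ (X : C) (m : 𝟙_ C ⟶ Y ⊗ X), ∃ m' : 𝟙_ C ⟶ X,
    ∀ P : Y ⟶ 𝟙_ C, m ≫ (P ⊗ₘ 𝟙 X) ≫ (λ_ X).hom = m'

/-! Via `d_{A'}` and static currying, `A ⇒ A' ≅ (A ⊗ (A' ⇒ I)) ⇒ I`. Since `d` is invertible on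
`A ⊗ (A' ⇒ I)`, every effect on this object is evaluation at a state of `A ⊗ (A' ⇒ I)`; as
`A' ⇒ I` has a single state, that state is a product `a ⊗ π`, and causality of `A'` turns the
`π`-part into the discarding effect `e'`. So every effect on `A ⇒ A'` factors through
`post e' : (A ⇒ A') ⟶ (A ⇒ I)`. Finally `A ⇒ I` has a single state, so its joint states are
product states, and in a deterministic theory their marginals do not depend on the effect. -/

namespace HOPT

variable {C : Type u} [Category.{v} C] [MonoidalCategory C] [SymmetricCategory C] (H : HOPT C)

@[simp] lemma curry_whiskerRight_ev {X A B : C} (f : X ⊗ A ⟶ B) :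
    H.curry f ▷ A ≫ H.ev A B = f := by
  simpa using H.curry_ev f

@[simp] lemma curry_whiskerRight_ev_assoc {X A B D : C} (f : X ⊗ A ⟶ B) (h : B ⟶ D) :
    H.curry f ▷ A ≫ H.ev A B ≫ h = f ≫ h := by
  rw [← Category.assoc, curry_whiskerRight_ev]

@[simp] lemma curry_whiskerRight_whiskerRight_ev {Y X A B : C} (f : Y ⊗ (X ⊗ A) ⟶ B) :
    H.curry f ▷ X ▷ A ≫ (α_ _ X A).hom ≫ H.ev (X ⊗ A) B = (α_ Y X A).hom ≫ f := by
  rw [associator_naturality_left_assoc, curry_whiskerRight_ev]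

lemma hom_ext {X A B : C} {g₁ g₂ : X ⟶ H.hom A B}
    (h : g₁ ▷ A ≫ H.ev A B = g₂ ▷ A ≫ H.ev A B) : g₁ = g₂ :=
  (H.curry_unique (by simpa using h)).trans (H.curry_unique (by simp)).symm

lemma ev_eq_braiding_dual (Z : C) : H.ev Z (𝟙_ C) =
    (β_ _ Z).hom ≫ H.dual Z ▷ _ ≫ H.ev (H.hom Z (𝟙_ C)) (𝟙_ C) := by
  simp [dual]

def post (A : C) {B B' : C} (g : B ⟶ B') : H.hom A B ⟶ H.hom A B' := H.curry (H.ev A B ≫ g)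

lemma post_comp (A : C) {B B' B'' : C} (g : B ⟶ B') (g' : B' ⟶ B'') :
    H.post A (g ≫ g') = H.post A g ≫ H.post A g' :=
  H.hom_ext (by simp [post])

@[simp] lemma post_id (A B : C) : H.post A (𝟙 B) = 𝟙 (H.hom A B) :=
  H.hom_ext (by simp [post])

instance isIso_post (A : C) {B B' : C} (g : B ⟶ B') [IsIso g] : IsIso (H.post A g) :=
  ⟨H.post A (inv g), by simp [← post_comp], by simp [← post_comp]⟩

def pre {B B' : C} (g : B ⟶ B') (D : C) : H.hom B' D ⟶ H.hom B D :=
  H.curry (H.hom B' D ◁ g ≫ H.ev B' D)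

lemma pre_comp {B B' B'' : C} (g : B ⟶ B') (g' : B' ⟶ B'') (D : C) :
    H.pre (g ≫ g') D = H.pre g' D ≫ H.pre g D :=
  H.hom_ext (by simp [pre, ← whisker_exchange_assoc])

@[simp] lemma pre_id (B D : C) : H.pre (𝟙 B) D = 𝟙 (H.hom B D) :=
  H.hom_ext (by simp [pre])

instance isIso_pre {B B' : C} (g : B ⟶ B') [IsIso g] (D : C) : IsIso (H.pre g D) :=
  ⟨H.pre (inv g) D, by simp [← pre_comp], by simp [← pre_comp]⟩

lemma dual_hom_comp_pre_dual (B : C) :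
    H.dual (H.hom B (𝟙_ C)) ≫ H.pre (H.dual B) (𝟙_ C) = 𝟙 (H.hom B (𝟙_ C)) :=
  H.hom_ext (by simp [pre, dual, ← whisker_exchange_assoc])

instance isIso_dual_hom (B : C) [IsIso (H.dual B)] : IsIso (H.dual (H.hom B (𝟙_ C))) := by
  have : IsIso (H.dual (H.hom B (𝟙_ C)) ≫ H.pre (H.dual B) (𝟙_ C)) := by
    rw [dual_hom_comp_pre_dual]; infer_instance
  exact IsIso.of_isIso_comp_right _ (H.pre (H.dual B) (𝟙_ C))

def staticCurryInv (X A B : C) : H.hom (X ⊗ A) B ⟶ H.hom X (H.hom A B) :=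
  H.curry (H.curry ((α_ _ X A).hom ≫ H.ev (X ⊗ A) B))

instance isIso_staticCurry (X A B : C) : IsIso (H.staticCurry X A B) := by
  refine ⟨H.staticCurryInv X A B, H.hom_ext (H.hom_ext (by simp [staticCurry, staticCurryInv])),
    H.hom_ext ?_⟩
  rw [comp_whiskerRight_assoc, staticCurry, tensorHom_id, curry_whiskerRight_ev,
    associator_inv_naturality_left_assoc, ← comp_whiskerRight_assoc, staticCurryInv,
    curry_whiskerRight_ev]
  simp

def evalAt {A : C} (a : 𝟙_ C ⟶ A) (B : C) : H.hom A B ⟶ B :=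
  (ρ_ _).inv ≫ H.hom A B ◁ a ≫ H.ev A B

lemma comp_evalAt {X A B : C} (g : X ⟶ H.hom A B) (a : 𝟙_ C ⟶ A) :
    g ≫ H.evalAt a B = (ρ_ X).inv ≫ X ◁ a ≫ g ▷ A ≫ H.ev A B := by
  simp [evalAt, whisker_exchange_assoc]

lemma post_comp_evalAt (A : C) {B B' : C} (g : B ⟶ B') (a : 𝟙_ C ⟶ A) :
    H.post A g ≫ H.evalAt a B' = H.evalAt a B ≫ g := by
  rw [comp_evalAt]; simp [post, evalAt]

lemma staticCurry_comp_evalAt {X A : C} (B : C) (x : 𝟙_ C ⟶ X) (a : 𝟙_ C ⟶ A) :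
    H.staticCurry X A B ≫ H.evalAt ((λ_ _).inv ≫ (x ⊗ₘ a)) B =
      H.evalAt x (H.hom A B) ≫ H.evalAt a B := by
  have coherence : H.hom X (H.hom A B) ◁ (λ_ _).inv ≫ H.hom X (H.hom A B) ◁ (x ⊗ₘ a) ≫
      (α_ _ _ _).inv = H.hom X (H.hom A B) ◁ x ≫ (ρ_ _).inv ≫ (H.hom X (H.hom A B) ⊗ X) ◁ a := by
    rw [MonoidalCategory.tensorHom_def]; monoidal
  simp only [comp_evalAt, staticCurry, tensorHom_id, curry_whiskerRight_ev, whiskerLeft_comp,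
    Category.assoc]
  rw [reassoc_of% coherence]
  simp only [evalAt, whisker_exchange_assoc, rightUnitor_inv_naturality_assoc, comp_whiskerRight,
    Category.assoc]

lemma exists_evalAt_eq_of_isIso_dual {Z : C} [IsIso (H.dual Z)] (Q : H.hom Z (𝟙_ C) ⟶ 𝟙_ C) :
    ∃ z : 𝟙_ C ⟶ Z, H.evalAt z (𝟙_ C) = Q := by
  refine ⟨H.curry ((λ_ _).hom ≫ Q) ≫ inv (H.dual Z), ?_⟩
  rw [evalAt, ev_eq_braiding_dual]
  simp [BraidedCategory.braiding_naturality_right_assoc]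

lemma existsUnique_state_hom_unit_of_causal {A : C} (hA : Causal A) :
    ∃! _p : 𝟙_ C ⟶ H.hom A (𝟙_ C), True := by
  obtain ⟨e, -, he⟩ := hA
  refine ⟨H.curry ((λ_ A).hom ≫ e), trivial, fun p _ => H.hom_ext ?_⟩
  rw [curry_whiskerRight_ev, ← he ((λ_ A).inv ≫ p ▷ A ≫ H.ev A (𝟙_ C)) trivial,
    Iso.hom_inv_id_assoc]

lemma exists_eq_post_comp_evalAt (hnc : NoCorrelations C) {A A' : C} (hA' : Causal A')
    [IsIso (H.dual A')] [IsIso (H.dual (A ⊗ H.hom A' (𝟙_ C)))] (e' : A' ⟶ 𝟙_ C)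
    (P : H.hom A A' ⟶ 𝟙_ C) : ∃ a : 𝟙_ C ⟶ A, P = H.post A e' ≫ H.evalAt a (𝟙_ C) := by
  let θ := H.post A (H.dual A') ≫ H.staticCurry A (H.hom A' (𝟙_ C)) (𝟙_ C)
  obtain ⟨z, hz⟩ := H.exists_evalAt_eq_of_isIso_dual (inv θ ≫ P)
  obtain ⟨a, π, rfl⟩ := hnc _ (H.existsUnique_state_hom_unit_of_causal hA') A z
  refine ⟨a, ?_⟩
  calc P = θ ≫ H.evalAt ((λ_ _).inv ≫ (a ⊗ₘ π)) (𝟙_ C) := by rw [hz, IsIso.hom_inv_id_assoc]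
    _ = H.evalAt a A' ≫ H.dual A' ≫ H.evalAt π (𝟙_ C) := by
      rw [Category.assoc, staticCurry_comp_evalAt, reassoc_of% post_comp_evalAt]
    _ = H.post A e' ≫ H.evalAt a (𝟙_ C) := by
      rw [post_comp_evalAt, hA'.unique (y₁ := H.dual A' ≫ H.evalAt π (𝟙_ C)) (y₂ := e') ⟨⟩ ⟨⟩]

end HOPT

section NoSignalling

variable {C : Type u} [Category.{v} C] [MonoidalCategory C] [SymmetricCategory C]

lemma hasNoSignallingStates_of_existsUnique_state (hdet : Deterministic C) (hnc : NoCorrelations C)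
    {Y : C} (hY : ∃! _π : 𝟙_ C ⟶ Y, True) : HasNoSignallingStates Y := by
  intro X m
  obtain ⟨m', π, hm⟩ := hnc Y hY X (m ≫ (β_ Y X).hom)
  refine ⟨m', fun P => ?_⟩
  have hm' : m = (λ_ _).inv ≫ (m' ⊗ₘ π) ≫ (β_ X Y).hom := by
    rw [← reassoc_of% hm, SymmetricCategory.symmetry, Category.comp_id]
  calc _ = (λ_ _).inv ≫ (m' ⊗ₘ (π ≫ P)) ≫ (ρ_ X).hom := by
        rw [hm', Category.assoc, Category.assoc, ← BraidedCategory.braiding_naturality_assoc,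
          braiding_leftUnitor, tensorHom_comp_tensorHom_assoc, Category.comp_id]
    _ = m' := by
        rw [hdet (π ≫ P) (𝟙 _), tensorHom_id, rightUnitor_naturality, ← unitors_equal,
          Iso.inv_hom_id_assoc]

lemma HasNoSignallingStates.of_forall_exists_eq_comp {Y Y' : C} (hY' : HasNoSignallingStates Y')
    (f : Y ⟶ Y') (hf : ∀ P : Y ⟶ 𝟙_ C, ∃ P' : Y' ⟶ 𝟙_ C, P = f ≫ P') :
    HasNoSignallingStates Y := by
  intro X m
  obtain ⟨m', hm'⟩ := hY' X (m ≫ f ▷ X)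
  refine ⟨m', fun P => ?_⟩
  obtain ⟨P', rfl⟩ := hf P
  simpa using hm' P'

end NoSignalling

/-- in a deterministic HOPT with no correlations with single-state objects,
where `⊗` preserves equivalence of double duals and `A, A'` are causal with `d_A, d_{A'}`
isomorphisms, the object `A ⇒ A'` has no-signalling states. -/
theorem stmt10 {C : Type u} [Category.{v} C] [MonoidalCategory C] [SymmetricCategory C]
    (H : HOPT C) (hdet : Deterministic C) (hnc : NoCorrelations C)
    (htens : ∀ A B : C, IsIso (H.dual A) → IsIso (H.dual B) → IsIso (H.dual (A ⊗ B)))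
    (A A' : C) (hA : Causal A) (hA' : Causal A')
    (hdA : IsIso (H.dual A)) (hdA' : IsIso (H.dual A')) :
    HasNoSignallingStates (H.hom A A') := by
  obtain ⟨e', -⟩ := hA'.exists
  have := htens _ _ hdA (H.isIso_dual_hom A')
  exact (hasNoSignallingStates_of_existsUnique_state hdet hnc
    (H.existsUnique_state_hom_unit_of_causal hA)).of_forall_exists_eq_comp (H.post A e')
    fun P => by obtain ⟨a, ha⟩ := H.exists_eq_post_comp_evalAt hnc hA' e' P; exact ⟨_, ha⟩
end

section
/- Let C be a symmetric monoidal category equipped with an insertion structure such that every insertion ε_{A,B} is completely injective and C has basic manipulations. Then the static identity is a two-sided unit for the composition manipulations: for all objects A, B, λ_{A⇒B}⁻¹ ≫ (îd_A ⊗ id_{A⇒B}) ≫ comp_{A,A,B} = id_{A⇒B} and ρ_{A⇒B}⁻¹ ≫ (id_{A⇒B} ⊗ îd_B) ≫ comp_{A,B,B} = id_{A⇒B}, where îd_A denotes the static version of the identity morphism on A and λ, ρ are the unitors. -/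
/-!
By complete injectivity, two morphisms into `A ⇒ B` agree once they agree after insertion, so it
suffices to evaluate both sides. The evaluation equation of `comp` turns this into a double
evaluation in which one factor is a static state `f̂`; the defining equation of `f̂` collapses that
factor to `f`, and the two braidings that remain cancel by symmetry. For `f = 𝟙` this leaves `ε`.
-/

open CategoryTheory MonoidalCategory

universe v u

open BraidedCategory

namespace Insertion

variable {C : Type u} [Category.{v} C] [MonoidalCategory C] [SymmetricCategory C]
  {E : Insertion C}

theorem CompletelyInjective.hom_ext (hinj : E.CompletelyInjective) {X A B : C}
    {h h' : X ⟶ E.hom A B} (w : (h ▷ A) ≫ E.ins A B = (h' ▷ A) ≫ E.ins A B) : h = h' :=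
  hinj X A B (by simpa only [tensorHom_id] using w)

variable (E)

theorem static_whiskerRight_ins {A B : C} (f : A ⟶ B) :
    (E.static f ▷ A) ≫ E.ins A B = (λ_ A).hom ≫ f := by
  rw [← tensorHom_id, E.static_ins]

theorem doubleEval_static_left {A B : C} (f : A ⟶ B) (D : C) :
    ((E.static f ▷ E.hom B D) ▷ A) ≫ E.doubleEval A B D
      = ((λ_ _).hom ▷ A) ≫ (E.hom B D ◁ f) ≫ E.ins B D := by
  simp only [doubleEval, id_tensorHom, tensorHom_id]
  rw [associator_naturality_left_assoc, ← whisker_exchange_assoc,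
    associator_inv_naturality_left_assoc, ← comp_whiskerRight_assoc, static_whiskerRight_ins,
    comp_whiskerRight_assoc, braiding_naturality_left_assoc]
  simp

theorem doubleEval_static_right (A : C) {B D : C} (g : B ⟶ D) :
    ((E.hom A B ◁ E.static g) ▷ A) ≫ E.doubleEval A B D
      = ((ρ_ _).hom ▷ A) ≫ E.ins A B ≫ g := by
  simp only [doubleEval, id_tensorHom, tensorHom_id]
  rw [associator_naturality_middle_assoc, ← whiskerLeft_comp_assoc, braiding_naturality_left,
    whiskerLeft_comp_assoc, associator_inv_naturality_right_assoc, whisker_exchange_assoc,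
    braiding_naturality_right_assoc, static_whiskerRight_ins]
  simp

namespace BasicManipulations

variable {E} (bm : E.BasicManipulations)

theorem comp_whiskerRight_ins (A B D : C) :
    (bm.comp A B D ▷ A) ≫ E.ins A D = E.doubleEval A B D := by
  rw [← tensorHom_id, bm.comp_eval]

theorem comp_static_left_ins {A B : C} (f : A ⟶ B) (D : C) :
    (((λ_ _).inv ≫ (E.static f ▷ _) ≫ bm.comp A B D) ▷ A) ≫ E.ins A D
      = (E.hom B D ◁ f) ≫ E.ins B D := by
  rw [comp_whiskerRight, comp_whiskerRight, Category.assoc, Category.assoc,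
    comp_whiskerRight_ins, doubleEval_static_left, ← comp_whiskerRight_assoc, Iso.inv_hom_id,
    id_whiskerRight, Category.id_comp]

theorem comp_static_right_ins (A : C) {B D : C} (g : B ⟶ D) :
    (((ρ_ _).inv ≫ (_ ◁ E.static g) ≫ bm.comp A B D) ▷ A) ≫ E.ins A D = E.ins A B ≫ g := by
  rw [comp_whiskerRight, comp_whiskerRight, Category.assoc, Category.assoc,
    comp_whiskerRight_ins, doubleEval_static_right, ← comp_whiskerRight_assoc, Iso.inv_hom_id,
    id_whiskerRight, Category.id_comp]

end BasicManipulations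

end Insertion

/-- the static identity is a two-sided unit for the composition manipulations. -/
theorem stmt17 {C : Type u} [Category.{v} C] [MonoidalCategory C] [SymmetricCategory C]
    (E : Insertion C) (hinj : E.CompletelyInjective) (bm : E.BasicManipulations) :
    ∀ A B : C,
      (λ_ (E.hom A B)).inv ≫ (E.static (𝟙 A) ⊗ₘ 𝟙 (E.hom A B)) ≫ bm.comp A A B
          = 𝟙 (E.hom A B) ∧
      (ρ_ (E.hom A B)).inv ≫ (𝟙 (E.hom A B) ⊗ₘ E.static (𝟙 B)) ≫ bm.comp A B B
          = 𝟙 (E.hom A B) := by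
  intro A B
  rw [tensorHom_id, id_tensorHom]
  constructor
  · refine hinj.hom_ext ?_
    rw [bm.comp_static_left_ins, whiskerLeft_id, id_whiskerRight]
  · refine hinj.hom_ext ?_
    rw [bm.comp_static_right_ins, Category.comp_id, id_whiskerRight, Category.id_comp]
end
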